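/- arXiv:2512.14199 — 2 statements merged into one kernel-verified Lean document; each statement's English description precedes it below -/
import Mathlib

section
/- Let B = (B_1,…,B_p) and C = (C_1,…,C_q) be two tuples of nonempty pairwise disjoint sets, each partitioning {0,1,…,n}, and suppose the pair (B,C) is non-crossing. Then for i ∈ [p] and j ∈ [q]: (a) C_j ∩ B_i ≠ ∅ if and only if |C_1|+⋯+|C_{j−1}| < |B_1|+⋯+|B_i| and |B_1|+⋯+|B_{i−1}| < |C_1|+⋯+|C_j|; (b) B_i ⊆ C_j if and only if |C_1|+⋯+|C_{j−1}| ≤ |B_1|+⋯+|B_{i−1}| and |B_1|+⋯+|B_i| ≤ |C_1|+⋯+|C_j|; (c) C_j ⊆ B_i if and only if |C_1|+⋯+|C_j| ≤ |B_1|+⋯+|B_i| and |B_1|+⋯+|B_{i−1}| ≤ |C_1|+⋯+|C_{j−1}|. -/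
noncomputable section

/-- Partial sum of block sizes: `|A₁| + ⋯ + |A_t|` (the first `t` blocks). -/
def psum {M m : ℕ} (A : Fin m → Finset (Fin M)) (t : ℕ) : ℕ :=
  ∑ x ∈ Finset.univ.filter (fun x : Fin m => (x : ℕ) < t), (A x).card

/-!
Label each point by the index of its block in `B` and in `C`. The non-crossing condition says
exactly that the two labellings are comonotone, so all the sublevel sets `{B-label < t}` and
`{C-label < s}` form one chain under inclusion. The partial sums of block sizes are the
cardinalities of these sublevel sets, blocks are differences of consecutive sublevel sets, and
inside a chain inclusion is decided by cardinality.
-/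

open Finset

section ChainCard

variable {α : Type*} {s t : Finset α}

lemma subset_iff_card_le_of_total (h : s ⊆ t ∨ t ⊆ s) : s ⊆ t ↔ #s ≤ #t :=
  ⟨card_le_card, fun hst => h.elim id fun hts => (eq_of_subset_of_card_le hts hst) ▸ Subset.rfl⟩

variable [DecidableEq α]

lemma card_union_of_total (h : s ⊆ t ∨ t ⊆ s) : #(s ∪ t) = max #s #t := by
  rcases h with h | h
  · rw [union_eq_right.2 h, max_eq_right (card_le_card h)]
  · rw [union_eq_left.2 h, max_eq_left (card_le_card h)]

lemma card_inter_of_total (h : s ⊆ t ∨ t ⊆ s) : #(s ∩ t) = min #s #t := by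
  rcases h with h | h
  · rw [inter_eq_left.2 h, min_eq_left (card_le_card h)]
  · rw [inter_eq_right.2 h, min_eq_right (card_le_card h)]

end ChainCard

lemma exists_index_of_partition {α ι : Type*} (B : ι → Finset α)
    (hdisj : ∀ i j, i ≠ j → Disjoint (B i) (B j)) (hcov : ∀ x, ∃ i, x ∈ B i) :
    ∃ f : α → ι, ∀ x k, x ∈ B k ↔ f x = k := by
  choose f hf using hcov
  refine ⟨f, fun x k => ⟨fun hk => ?_, fun h => h ▸ hf x⟩⟩
  by_contra hne
  exact disjoint_left.1 (hdisj _ _ hne) (hf x) hk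

section Sublevel

variable {X : Type*}

def Noncrossing (f g : X → ℕ) : Prop := ∀ x y, f x < f y → g x ≤ g y

lemma Noncrossing.symm {f g : X → ℕ} (h : Noncrossing f g) : Noncrossing g f :=
  fun x y hxy => le_of_not_gt fun hyx => (h y x hyx).not_gt hxy

variable [Fintype X]

def sublevel (f : X → ℕ) (t : ℕ) : Finset X := univ.filter fun x => f x < t

@[simp]
lemma mem_sublevel {f : X → ℕ} {t : ℕ} {x : X} : x ∈ sublevel f t ↔ f x < t := by
  simp [sublevel]

lemma card_sublevel_lt_succ {f : X → ℕ} {i : ℕ} (hi : ∃ x, f x = i) :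
    #(sublevel f i) < #(sublevel f (i + 1)) := by
  obtain ⟨x, rfl⟩ := hi
  refine card_lt_card ((ssubset_iff_of_subset fun y hy => ?_).2 ⟨x, by simp, by simp⟩)
  simp only [mem_sublevel] at hy ⊢
  omega

lemma psum_eq_card_sublevel {M m : ℕ} (A : Fin m → Finset (Fin M)) (f : Fin M → Fin m)
    (hf : ∀ x k, x ∈ A k ↔ f x = k) (t : ℕ) :
    psum A t = #(sublevel (fun x => (f x : ℕ)) t) := by
  rw [card_eq_sum_card_fiberwise (f := f) (t := univ.filter fun k : Fin m => (k : ℕ) < t)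
    fun x hx => by simpa using hx]
  refine sum_congr rfl fun k hk => congrArg card ?_
  ext x
  simp only [mem_filter, mem_univ, true_and] at hk
  simp only [hf, mem_filter, mem_sublevel]
  exact ⟨fun h => ⟨h ▸ hk, h⟩, And.right⟩

namespace Noncrossing

variable {f g : X → ℕ}

lemma sublevel_subset_of_mem (h : Noncrossing f g) {x : X} {t s : ℕ} (hfx : f x < t)
    (hgx : s ≤ g x) : sublevel g s ⊆ sublevel f t := by
  intro y hy
  simp only [mem_sublevel] at hy ⊢
  by_contra hyt
  have := h x y (by omega)
  omega

lemma card_sublevel_lt_of_mem (h : Noncrossing f g) {x : X} {t s : ℕ} (hfx : f x < t)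
    (hgx : s ≤ g x) : #(sublevel g s) < #(sublevel f t) :=
  card_lt_card ((ssubset_iff_of_subset (h.sublevel_subset_of_mem hfx hgx)).2
    ⟨x, by simpa using hfx, by simpa using hgx⟩)

lemma sublevel_total (h : Noncrossing f g) (t s : ℕ) :
    sublevel f t ⊆ sublevel g s ∨ sublevel g s ⊆ sublevel f t := by
  rw [or_iff_not_imp_left, not_subset]
  rintro ⟨x, hxf, hxg⟩
  simp only [mem_sublevel, not_lt] at hxf hxg
  exact h.sublevel_subset_of_mem hxf hxg

lemma fiber_subset_iff (h : Noncrossing f g) {i j : ℕ} (hi : ∃ x, f x = i) :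
    (∀ x, f x = i → g x = j) ↔
      sublevel g j ⊆ sublevel f i ∧ sublevel f (i + 1) ⊆ sublevel g (j + 1) := by
  obtain ⟨z, hz⟩ := hi
  constructor
  · intro hij
    have hgz := hij z hz
    refine ⟨fun y hy => ?_, fun y hy => ?_⟩
    · have hyi := h.sublevel_subset_of_mem (x := z) (t := i + 1) (s := j) (by omega) hgz.ge hy
      simp only [mem_sublevel] at hy hyi ⊢
      by_contra hyi'
      have := hij y (by omega)
      omega
    · have hyj := h.symm.sublevel_subset_of_mem (x := z) (t := j + 1) (s := i) (by omega) hz.ge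
      simp only [mem_sublevel] at hy hyj ⊢
      rcases Nat.lt_succ_iff_lt_or_eq.1 hy with hy | hy
      · simpa using hyj (by simpa using hy)
      · have := hij y hy
        omega
  · rintro ⟨hji, hij⟩ x hx
    have hxj := hij (mem_sublevel.2 (by omega) : x ∈ sublevel f (i + 1))
    have hxj' : x ∉ sublevel g j := fun hxj' => by simpa [hx] using hji hxj'
    simp only [mem_sublevel, not_lt] at hxj hxj'
    omega

lemma fiber_subset_iff_card_le (h : Noncrossing f g) {i j : ℕ} (hi : ∃ x, f x = i) :
    (∀ x, f x = i → g x = j) ↔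
      #(sublevel g j) ≤ #(sublevel f i) ∧ #(sublevel f (i + 1)) ≤ #(sublevel g (j + 1)) := by
  rw [h.fiber_subset_iff hi, subset_iff_card_le_of_total (h.sublevel_total i j).symm,
    subset_iff_card_le_of_total (h.sublevel_total (i + 1) (j + 1))]

lemma exists_fiber_inter_iff_card_lt [DecidableEq X] (h : Noncrossing f g) {i j : ℕ}
    (hi : ∃ x, f x = i) (hj : ∃ x, g x = j) :
    (∃ x, f x = i ∧ g x = j) ↔
      #(sublevel g j) < #(sublevel f (i + 1)) ∧ #(sublevel f i) < #(sublevel g (j + 1)) := by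
  constructor
  · rintro ⟨x, hfx, hgx⟩
    exact ⟨h.card_sublevel_lt_of_mem (by omega) hgx.ge,
      h.symm.card_sublevel_lt_of_mem (by omega) hfx.ge⟩
  · rintro ⟨hji, hij⟩
    have hlt : #(sublevel f i ∪ sublevel g j) < #(sublevel f (i + 1) ∩ sublevel g (j + 1)) := by
      rw [card_union_of_total (h.sublevel_total i j),
        card_inter_of_total (h.sublevel_total (i + 1) (j + 1))]
      have := card_sublevel_lt_succ hi
      have := card_sublevel_lt_succ hj
      omega
    obtain ⟨x, hx, hx'⟩ := exists_mem_notMem_of_card_lt_card hlt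
    simp only [mem_union, mem_inter, mem_sublevel, not_or, not_lt] at hx hx'
    exact ⟨x, by omega, by omega⟩

end Noncrossing

end Sublevel

/-- For a non-crossing pair of ordered set partitions `B = (B₁,…,B_p)` and
`C = (C₁,…,C_q)` of `{0,…,n}`, intersection and inclusion of blocks are
characterized by partial sums of block sizes. -/
theorem noncrossing_block_intersection
    (n p q : ℕ)
    (B : Fin p → Finset (Fin (n + 1))) (C : Fin q → Finset (Fin (n + 1)))
    (hBne : ∀ i, (B i).Nonempty)
    (hBdisj : ∀ i j, i ≠ j → Disjoint (B i) (B j))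
    (hBcov : ∀ x : Fin (n + 1), ∃ i, x ∈ B i)
    (hCne : ∀ j, (C j).Nonempty)
    (hCdisj : ∀ i j, i ≠ j → Disjoint (C i) (C j))
    (hCcov : ∀ x : Fin (n + 1), ∃ j, x ∈ C j)
    (hnc : ¬ ∃ (i i' : Fin p) (j j' : Fin q), i < i' ∧ j < j' ∧
      (B i ∩ C j').Nonempty ∧ (B i' ∩ C j).Nonempty)
    (i : Fin p) (j : Fin q) :
    ((C j ∩ B i).Nonempty ↔
      psum C (j : ℕ) < psum B ((i : ℕ) + 1) ∧
      psum B (i : ℕ) < psum C ((j : ℕ) + 1)) ∧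
    (B i ⊆ C j ↔
      psum C (j : ℕ) ≤ psum B (i : ℕ) ∧
      psum B ((i : ℕ) + 1) ≤ psum C ((j : ℕ) + 1)) ∧
    (C j ⊆ B i ↔
      psum C ((j : ℕ) + 1) ≤ psum B ((i : ℕ) + 1) ∧
      psum B (i : ℕ) ≤ psum C (j : ℕ)) := by
  obtain ⟨f, hf⟩ := exists_index_of_partition B hBdisj hBcov
  obtain ⟨g, hg⟩ := exists_index_of_partition C hCdisj hCcov
  have hfg : Noncrossing (fun x => (f x : ℕ)) (fun x => (g x : ℕ)) := fun x y hxy =>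
    le_of_not_gt fun hyx => hnc ⟨f x, f y, g y, g x, hxy, hyx,
      ⟨x, mem_inter.2 ⟨(hf x _).2 rfl, (hg x _).2 rfl⟩⟩,
      ⟨y, mem_inter.2 ⟨(hf y _).2 rfl, (hg y _).2 rfl⟩⟩⟩
  have hfi : ∃ x, (f x : ℕ) = i := (hBne i).imp fun x hx => congrArg Fin.val ((hf x i).1 hx)
  have hgj : ∃ x, (g x : ℕ) = j := (hCne j).imp fun x hx => congrArg Fin.val ((hg x j).1 hx)
  simp only [psum_eq_card_sublevel B f hf, psum_eq_card_sublevel C g hg]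
  rw [← hfg.exists_fiber_inter_iff_card_lt hfi hgj, ← hfg.fiber_subset_iff_card_le hfi,
    and_comm (a := #(sublevel (fun x => (g x : ℕ)) (j + 1)) ≤ _),
    ← hfg.symm.fiber_subset_iff_card_le hgj]
  simp [Finset.Nonempty, subset_iff, hf, hg, Fin.val_inj, and_comm]
end
end

section
/- For all integers p, q ≥ 1 with n = p + q, the generalized Eulerian polynomial of the poset T(p,q) satisfies A(T(p,q), t) = Σ_{i=0}^{y} C(n,i) (t^i + t^{i+1} + ⋯ + t^{n−i−1}) + Σ_{i=1}^{p−2} C(n, i+1) (t + t^2 + ⋯ + t^{n−i−2}) A_{i+1}(t), where y = min(1, p−1), C(·,·) denotes binomial coefficients, and the second sum is empty when p ≤ 2. -/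
/-!
A relabeling of `T(p,q)` is determined by the injective word `w` listing the labels of its
chain from the top down; the remaining (free) labels form the antichain above `w 0`. Its ascents
are the descents of `w` together with the free labels exceeding `w 0`. Putting a new top `x` on
the chain adds a descent iff `w 0 < x`, and the free labels to count are now those above `x`;
summing over the `f` free choices of `x` turns `t ^ (that count)` into
`t ^ (that count) + t + ⋯ + t ^ (f - 1)`. The descents alone contribute
`∑_w t ^ des w = C(n, p) A_p(t)`, since `w` amounts to a `p`-subset of `[n]` together with a
permutation pattern. Iterating from the one-element chain gives the formula.
-/

noncomputable section

/-- `j` covers `i` in the order relation `r`. -/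
def CoversRel {α : Type*} (r : α → α → Prop) (i j : α) : Prop :=
  r i j ∧ i ≠ j ∧ ∀ k, r i k → r k j → k = i ∨ k = j

/-- The number of ascents of an order relation `R` on `Fin N`: cover pairs
`(i, j)` with `j` covering `i` and `i < j` as integers. -/
def ascCount {N : ℕ} (R : Fin N → Fin N → Prop) : ℕ :=
  Nat.card {pq : Fin N × Fin N //
    CoversRel R pq.1 pq.2 ∧ (pq.1 : ℕ) < (pq.2 : ℕ)}

/-- The generalized Eulerian polynomial `A(Q,t)` of a poset `Q` on `[N]`:
the sum of `t ^ asc(T)` over the distinct relabelings `T = σ(Q)` of `Q` by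
permutations `σ` of `[N]`. -/
def genEuler {N : ℕ} (Q : Fin N → Fin N → Prop) (t : ℝ) : ℝ :=
  ∑ᶠ R ∈ {R : Fin N → Fin N → Prop |
      ∃ σ : Equiv.Perm (Fin N), R = fun i j => Q (σ.symm i) (σ.symm j)},
    t ^ ascCount R

/-- The partial order `T(p,q)` on `[p+q]` (0-indexed here): the chain
`1 < 2 < ⋯ < p` with the `q` elements `p+1, …, p+q` all placed above `p`
(and mutually incomparable). -/
def Trel (p q : ℕ) : Fin (p + q) → Fin (p + q) → Prop :=
  fun i j => i = j ∨ ((i : ℕ) < p ∧ (i : ℕ) < (j : ℕ))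

/-- The number of descents of a permutation `σ` of `[k]`. -/
def descount {k : ℕ} (σ : Equiv.Perm (Fin k)) : ℕ :=
  Nat.card {pq : Fin k × Fin k //
    (pq.2 : ℕ) = (pq.1 : ℕ) + 1 ∧ σ pq.2 < σ pq.1}

/-- The classical Eulerian polynomial `A_k(t) = ∑_{σ ∈ S_k} t^{des σ}`. -/
def Aeul (k : ℕ) (t : ℝ) : ℝ :=
  ∑ σ : Equiv.Perm (Fin k), t ^ descount σ

open Finset

lemma sum_Icc_one_eq_sum_range {M : Type*} [AddCommMonoid M] (f : ℕ → M) (k : ℕ) :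
    ∑ i ∈ Icc 1 k, f i = ∑ i ∈ range k, f (i + 1) := by
  rw [← Ico_add_one_right_eq_Icc, sum_Ico_eq_sum_range]
  simp [add_comm]

/- The exponents `#{c ∈ C | x < c}` run through `0, 1, …, #C - 1`, and `P` raises those of an
upper set by one. -/
lemma sum_pow_ite_add_card_filter_lt {R α : Type*} [CommSemiring R] [LinearOrder α] (t : R)
    (P : α → Prop) [DecidablePred P] (hP : Monotone P) (C : Finset α) :
    ∑ x ∈ C, t ^ ((if P x then 1 else 0) + #{c ∈ C | x < c}) + 1 =
      t ^ #{c ∈ C | P c} + ∑ j ∈ range #C, t ^ j := by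
  induction C using Finset.induction_on_min with
  | empty => simp
  | insert a s ha ih =>
    have has : a ∉ s := fun h => lt_irrefl a (ha a h)
    have habove : #{c ∈ insert a s | a < c} = #s := by
      rw [filter_insert, if_neg (lt_irrefl a), filter_true_of_mem ha]
    have hbelow : ∀ x ∈ s, {c ∈ insert a s | x < c} = {c ∈ s | x < c} := fun x hx => by
      rw [filter_insert, if_neg (not_lt.2 (ha x hx).le)]
    rw [sum_insert has, sum_congr rfl fun x hx => by rw [hbelow x hx], habove,
      card_insert_of_notMem has, sum_range_succ, filter_insert]
    by_cases hPa : P a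
    · have hPs : {c ∈ s | P c} = s := filter_true_of_mem fun c hc => hP (ha c hc).le hPa
      rw [if_pos hPa, if_pos hPa, hPs, card_insert_of_notMem has, add_assoc, ih, hPs]
      ring
    · rw [if_neg hPa, if_neg hPa, zero_add, add_assoc, ih]
      ring

lemma exists_perm_apply_eq {α β : Type*} [Finite β] (f g : α ↪ β) :
    ∃ σ : Equiv.Perm β, ∀ a, σ (f a) = g a := by
  classical
  refine ⟨((Equiv.ofInjective f f.injective).symm.trans
    (Equiv.ofInjective g g.injective)).extendSubtype, fun a => ?_⟩
  rw [Equiv.extendSubtype_apply_of_mem _ _ ⟨a, rfl⟩]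
  simp

lemma bijective_perm_trans_orderEmbOfFin (β : Type*) [Fintype β] [LinearOrder β] (k : ℕ) :
    Function.Bijective fun x : {S : Finset β // #S = k} × Equiv.Perm (Fin k) =>
      x.2.toEmbedding.trans (x.1.1.orderEmbOfFin x.1.2).toEmbedding := by
  refine (Fintype.bijective_iff_injective_and_card _).2 ⟨?_, ?_⟩
  · rintro ⟨⟨S, hS⟩, σ⟩ ⟨⟨S', hS'⟩, σ'⟩ h
    have hrange := congrArg Set.range (congrArg DFunLike.coe h)
    simp only [Function.Embedding.coe_trans, Equiv.coe_toEmbedding, Set.range_comp,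
      σ.surjective.range_eq, σ'.surjective.range_eq, Set.image_univ, RelEmbedding.coe_toEmbedding,
      range_orderEmbOfFin] at hrange
    obtain rfl : S = S' := coe_injective hrange
    exact Prod.ext rfl (Equiv.ext fun v => (S.orderEmbOfFin hS).injective (DFunLike.congr_fun h v))
  · simp [Fintype.card_embedding_eq, Nat.descFactorial_eq_factorial_mul_choose, Fintype.card_perm,
      mul_comm]

section ChainRel

variable {α : Type*}

/-- The poset on `α` in which `w (k-1) < ⋯ < w 1 < w 0` is a chain and every element outside
the range of `w` lies above `w 0`, those elements being pairwise incomparable. -/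
def chainRel {k : ℕ} (w : Fin k ↪ α) (i j : α) : Prop :=
  i = j ∨ ∃ u, w u = i ∧ ∀ v, u ≤ v → w v ≠ j

section

variable {k : ℕ} {w : Fin k ↪ α}

lemma chainRel_of_notMem_range {i j : α} (hi : i ∉ Set.range w) :
    chainRel w i j ↔ i = j := by
  refine ⟨fun h => h.resolve_right ?_, Or.inl⟩
  rintro ⟨u, rfl, -⟩
  exact hi ⟨u, rfl⟩

lemma chainRel_apply_left (u : Fin k) (j : α) :
    chainRel w (w u) j ↔ ∀ v, u < v → w v ≠ j := by
  constructor
  · rintro (rfl | ⟨u', hu', hv⟩) v huv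
    · exact w.injective.ne huv.ne'
    · obtain rfl := w.injective hu'
      exact hv v huv.le
  · intro h
    by_cases hj : w u = j
    · exact Or.inl hj
    · refine Or.inr ⟨u, rfl, fun v huv => ?_⟩
      rcases huv.eq_or_lt with rfl | huv
      exacts [hj, h v huv]

lemma chainRel_apply_apply (u v : Fin k) : chainRel w (w u) (w v) ↔ v ≤ u := by
  rw [chainRel_apply_left]
  refine ⟨fun h => not_lt.1 fun huv => h v huv rfl, fun hvu v' huv' => ?_⟩
  exact w.injective.ne (hvu.trans_lt huv').ne'

lemma chainRel_antisymm {i j : α} (hij : chainRel w i j) (hji : chainRel w j i) : i = j := by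
  by_cases hi : i ∈ Set.range w
  · obtain ⟨u, rfl⟩ := hi
    by_cases hj : j ∈ Set.range w
    · obtain ⟨v, rfl⟩ := hj
      rw [chainRel_apply_apply] at hij hji
      rw [le_antisymm hji hij]
    · exact ((chainRel_of_notMem_range hj).1 hji).symm
  · exact (chainRel_of_notMem_range hi).1 hij

lemma chainRel_apply_of_eq_of_lt {w' : Fin k ↪ α} {u : Fin k}
    (h : ∀ v, u < v → w v = w' v) : chainRel w (w u) (w' u) := by
  rw [chainRel_apply_left]
  intro v huv hv
  rw [h v huv] at hv
  exact huv.ne (w'.injective hv).symm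

lemma chainRel_injective :
    Function.Injective (chainRel : (Fin k ↪ α) → α → α → Prop) := by
  intro w w' h
  ext1 u
  induction u using WellFoundedGT.induction with
  | _ u ih =>
    refine chainRel_antisymm (chainRel_apply_of_eq_of_lt ih) ?_
    rw [h]
    exact chainRel_apply_of_eq_of_lt fun v huv => (ih v huv).symm

lemma chainRel_relabel (σ : Equiv.Perm α) :
    (fun i j => chainRel w (σ.symm i) (σ.symm j)) = chainRel (w.trans σ.toEmbedding) := by
  funext i j
  simp [chainRel, Equiv.eq_symm_apply]

end

lemma coversRel_chainRel_succ_castSucc {m : ℕ} (w : Fin (m + 1) ↪ α) (u : Fin m) :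
    CoversRel (chainRel w) (w u.succ) (w u.castSucc) := by
  refine ⟨(chainRel_apply_apply _ _).2 (Fin.castSucc_le_succ u),
    w.injective.ne Fin.castSucc_lt_succ.ne', fun k hik hkj => ?_⟩
  by_cases hk : k ∈ Set.range w
  · obtain ⟨v, rfl⟩ := hk
    rw [chainRel_apply_apply] at hik hkj
    rcases hkj.eq_or_lt with h | h
    · exact Or.inr (congrArg w h.symm)
    · exact Or.inl (congrArg w (le_antisymm hik (Fin.castSucc_lt_iff_succ_le.1 h)))
  · exact Or.inr ((chainRel_of_notMem_range hk).1 hkj)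

lemma coversRel_chainRel_zero {m : ℕ} (w : Fin (m + 1) ↪ α) {j : α} (hj : j ∉ Set.range w) :
    CoversRel (chainRel w) (w 0) j := by
  refine ⟨(chainRel_apply_left _ _).2 fun v _ hv => hj ⟨v, hv⟩,
    fun h => hj ⟨0, h⟩, fun k hik hkj => ?_⟩
  by_cases hk : k ∈ Set.range w
  · obtain ⟨v, rfl⟩ := hk
    rw [chainRel_apply_apply] at hik
    exact Or.inl (congrArg w (Fin.le_zero_iff.1 hik))
  · exact Or.inr ((chainRel_of_notMem_range hk).1 hkj)

lemma coversRel_chainRel_iff {m : ℕ} (w : Fin (m + 1) ↪ α) (i j : α) :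
    CoversRel (chainRel w) i j ↔
      (∃ u : Fin m, w u.succ = i ∧ w u.castSucc = j) ∨ (w 0 = i ∧ j ∉ Set.range w) := by
  refine ⟨fun ⟨hij, hne, hmid⟩ => ?_, ?_⟩
  · obtain ⟨u, rfl⟩ : i ∈ Set.range w := by
      by_contra hi
      exact hne ((chainRel_of_notMem_range hi).1 hij)
    rw [chainRel_apply_left] at hij
    induction u using Fin.cases with
    | zero =>
      refine Or.inr ⟨rfl, ?_⟩
      rintro ⟨v, rfl⟩
      rcases Fin.eq_zero_or_eq_succ v with rfl | ⟨v, rfl⟩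
      exacts [hne rfl, hij v.succ (Fin.succ_pos v) rfl]
    | succ u =>
      have hkj : chainRel w (w u.castSucc) j := by
        rw [chainRel_apply_left]
        intro v huv
        rcases (Fin.castSucc_lt_iff_succ_le.1 huv).eq_or_lt with rfl | hv
        exacts [hne, hij v hv]
      rcases hmid _ ((chainRel_apply_apply _ _).2 (Fin.castSucc_le_succ u)) hkj with h | h
      · exact absurd (w.injective h) Fin.castSucc_lt_succ.ne
      · exact Or.inl ⟨u, rfl, h⟩
  · rintro (⟨u, rfl, rfl⟩ | ⟨rfl, hj⟩)
    exacts [coversRel_chainRel_succ_castSucc w u, coversRel_chainRel_zero w hj]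

end ChainRel

/-- `Trel p q` lists its chain bottom-up, `chainRel` top-down. -/
def trelChain (p q : ℕ) : Fin p ↪ Fin (p + q) :=
  Fin.revPerm.toEmbedding.trans (Fin.castAddEmb q)

lemma Trel_eq_chainRel (p q : ℕ) : Trel p q = chainRel (trelChain p q) := by
  funext i j
  simp only [Trel, chainRel, trelChain, Function.Embedding.trans_apply, Equiv.coe_toEmbedding,
    Fin.revPerm_apply, Fin.castAddEmb_apply, Fin.ext_iff, Fin.val_castAdd, Fin.val_rev, Fin.le_def,
    ne_eq, eq_iff_iff]
  refine or_congr_right ⟨fun ⟨hi, hij⟩ => ⟨⟨p - 1 - i, by omega⟩, by dsimp only; omega,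
      fun v hv => by dsimp only at hv ⊢; omega⟩,
    fun ⟨u, hu, hv⟩ => ⟨by omega, not_le.1 fun hj =>
      hv ⟨p - 1 - j, by omega⟩ (by dsimp only; omega) (by dsimp only; omega)⟩⟩

lemma relabelings_Trel (p q : ℕ) :
    {R | ∃ σ : Equiv.Perm (Fin (p + q)), R = fun i j => Trel p q (σ.symm i) (σ.symm j)} =
      Set.range (chainRel : (Fin p ↪ Fin (p + q)) → _) := by
  ext R
  simp only [Set.mem_ofPred_eq, Set.mem_range, Trel_eq_chainRel, chainRel_relabel]
  constructor
  · rintro ⟨σ, rfl⟩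
    exact ⟨_, rfl⟩
  · rintro ⟨w, rfl⟩
    obtain ⟨σ, hσ⟩ := exists_perm_apply_eq (trelChain p q) w
    exact ⟨σ, congrArg chainRel (Function.Embedding.ext hσ).symm⟩

section Statistics

variable {α : Type*} [LinearOrder α] {m : ℕ}

def wordDes (w : Fin (m + 1) → α) : ℕ := #{u : Fin m | w u.succ < w u.castSucc}

def aboveTop [Fintype α] (w : Fin (m + 1) → α) : ℕ := #{j ∈ (univ.image w)ᶜ | w 0 < j}

lemma wordDes_comp_strictMono {β : Type*} [LinearOrder β] {e : α → β} (he : StrictMono e)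
    (w : Fin (m + 1) → α) : wordDes (e ∘ w) = wordDes w := by
  simp only [wordDes, Function.comp_apply, he.lt_iff_lt]

lemma wordDes_cons (x : α) (w : Fin (m + 1) → α) :
    wordDes (Fin.cons x w : Fin (m + 2) → α) = wordDes w + if w 0 < x then 1 else 0 := by
  rw [wordDes, wordDes, card_filter, card_filter, Fin.sum_univ_succ, add_comm]
  simp

lemma aboveTop_cons [Fintype α] (x : α) (w : Fin (m + 1) → α) :
    aboveTop (Fin.cons x w : Fin (m + 2) → α) = #{j ∈ (univ.image w)ᶜ | x < j} := by
  unfold aboveTop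
  congr 1
  ext j
  simp only [mem_filter, mem_compl, mem_image, mem_univ, true_and, Fin.exists_fin_succ,
    Fin.cons_zero, Fin.cons_succ, not_or]
  exact ⟨fun ⟨⟨_, hj⟩, hx⟩ => ⟨hj, hx⟩,
    fun ⟨hj, hx⟩ => ⟨⟨hx.ne, hj⟩, hx⟩⟩

lemma descount_eq_wordDes (σ : Equiv.Perm (Fin (m + 1))) : descount σ = wordDes σ := by
  rw [descount, wordDes, ← Fintype.card_subtype, ← Nat.card_eq_fintype_card]
  refine Nat.card_congr
    { toFun := fun x => ⟨⟨x.1.1, by omega⟩, ?_⟩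
      invFun := fun u => ⟨(u.1.castSucc, u.1.succ), by simp, u.2⟩
      left_inv := fun x => ?_
      right_inv := fun _ => rfl }
  all_goals
    obtain ⟨⟨a, b⟩, hab, hlt⟩ := x
    dsimp only at hab hlt ⊢
    have hb : (⟨a, by omega⟩ : Fin m).succ = b := Fin.ext (by simp [hab])
  · rw [hb]; exact hlt
  · exact Subtype.ext (Prod.ext rfl hb)

lemma ascCount_chainRel {n : ℕ} (w : Fin (m + 1) ↪ Fin n) :
    ascCount (chainRel w) = wordDes w + aboveTop w := by
  classical
  let chainCover : Fin m ↪ Fin n × Fin n :=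
    ⟨fun u => (w u.succ, w u.castSucc),
      fun u v h => Fin.succ_injective _ (w.injective (congrArg Prod.fst h))⟩
  let topCover : Fin n ↪ Fin n × Fin n :=
    ⟨fun j => (w 0, j), fun i j h => congrArg Prod.snd h⟩
  have hdisj : Disjoint (({u | w u.succ < w u.castSucc} : Finset (Fin m)).map chainCover)
      (({j ∈ (univ.image w)ᶜ | w 0 < j} : Finset (Fin n)).map topCover) := by
    simp only [disjoint_left, mem_map]
    rintro _ ⟨u, -, rfl⟩ ⟨j, -, h⟩
    exact Fin.succ_ne_zero u (w.injective (congrArg Prod.fst h).symm)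
  rw [ascCount, Nat.card_eq_fintype_card, Fintype.card_subtype, wordDes, aboveTop,
    ← card_map chainCover, ← card_map topCover, ← card_union_of_disjoint hdisj]
  congr 1
  ext ⟨i, j⟩
  simp only [mem_filter, mem_univ, true_and, coversRel_chainRel_iff, mem_union, mem_map,
    mem_compl, mem_image, Set.mem_range, Fin.val_fin_lt]
  constructor
  · rintro ⟨⟨u, rfl, rfl⟩ | ⟨rfl, hj⟩, hlt⟩
    exacts [Or.inl ⟨u, hlt, rfl⟩, Or.inr ⟨j, ⟨hj, hlt⟩, rfl⟩]
  · rintro (⟨u, hlt, ⟨⟩⟩ | ⟨j, ⟨hj, hlt⟩, ⟨⟩⟩)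
    exacts [⟨Or.inl ⟨u, rfl, rfl⟩, hlt⟩, ⟨Or.inr ⟨rfl, hj⟩, hlt⟩]

end Statistics

lemma sum_pow_wordDes_embedding (m n : ℕ) (t : ℝ) :
    ∑ w : Fin (m + 1) ↪ Fin n, t ^ wordDes w = n.choose (m + 1) * Aeul (m + 1) t := by
  rw [← (Equiv.ofBijective _ (bijective_perm_trans_orderEmbOfFin _ _)).sum_comp,
    Fintype.sum_prod_type]
  simp only [Equiv.ofBijective_apply, Function.Embedding.coe_trans, Equiv.coe_toEmbedding,
    RelEmbedding.coe_toEmbedding, wordDes_comp_strictMono (orderEmbOfFin _ _).strictMono,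
    ← descount_eq_wordDes]
  simp [Aeul]

lemma Aeul_one (t : ℝ) : Aeul 1 t = 1 := by
  simp [Aeul, descount_eq_wordDes (m := 0), wordDes]

def chainAscSum (m n : ℕ) (t : ℝ) : ℝ :=
  ∑ w : Fin (m + 1) ↪ Fin n, t ^ (wordDes w + aboveTop w)

lemma genEuler_Trel (m q : ℕ) (t : ℝ) :
    genEuler (Trel (m + 1) q) t = chainAscSum m (m + 1 + q) t := by
  rw [genEuler, relabelings_Trel, finsum_mem_range chainRel_injective,
    finsum_eq_sum_of_fintype]
  simp only [ascCount_chainRel, chainAscSum]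

lemma chainAscSum_zero (n : ℕ) (t : ℝ) : chainAscSum 0 n t = ∑ j ∈ range n, t ^ j := by
  have key := sum_pow_ite_add_card_filter_lt t (fun _ => False) (fun _ _ _ => id)
    (univ : Finset (Fin n))
  simp only [if_false, zero_add, filter_false, card_empty, pow_zero, card_univ,
    Fintype.card_fin] at key
  have hterm (w : Fin 1 ↪ Fin n) : wordDes w + aboveTop w = #{j | w 0 < j} := by
    simp only [wordDes, aboveTop, univ_eq_empty, filter_empty, card_empty, zero_add]
    congr 1
    ext j
    simp only [mem_filter, mem_compl, mem_image, mem_univ, true_and, and_iff_right_iff_imp]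
    rintro h ⟨a, rfl⟩
    exact h.ne (congrArg w (Subsingleton.elim (α := Fin 1) 0 a))
  rw [← add_left_cancel ((add_comm _ _).trans key), chainAscSum]
  exact Fintype.sum_equiv (Equiv.uniqueEmbeddingEquivResult (α := Fin 1)) _ _
    fun w => by rw [hterm w]; rfl

lemma sum_extend_chain_pow {m n : ℕ} (h : m + 2 ≤ n) (u : Fin (m + 1) ↪ Fin n) (t : ℝ) :
    ∑ x : {x // x ∉ Set.range u},
        t ^ ((if u 0 < x.1 then 1 else 0) + #{j ∈ (univ.image u)ᶜ | x.1 < j}) =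
      t ^ aboveTop u + ∑ j ∈ Icc 1 (n - m - 2), t ^ j := by
  have key := sum_pow_ite_add_card_filter_lt t (u 0 < ·) (fun _ _ h h' => h'.trans_le h)
    (univ.image u)ᶜ
  rw [card_compl, card_image_of_injective _ u.injective, card_univ, Fintype.card_fin,
    Fintype.card_fin, show n - (m + 1) = n - m - 2 + 1 by omega, sum_range_succ', pow_zero,
    ← add_assoc, ← sum_Icc_one_eq_sum_range (t ^ ·),
    sum_subtype (p := (· ∉ Set.range u)) _ (by simp)] at key
  exact add_right_cancel key

lemma chainAscSum_succ {m n : ℕ} (h : m + 2 ≤ n) (t : ℝ) :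
    chainAscSum (m + 1) n t = chainAscSum m n t +
      n.choose (m + 1) * (∑ j ∈ Icc 1 (n - m - 2), t ^ j) * Aeul (m + 1) t := by
  rw [chainAscSum, ← (Equiv.embeddingFinSucc (m + 1) (Fin n)).symm.sum_comp, Fintype.sum_sigma]
  simp only [Equiv.coe_embeddingFinSucc_symm, wordDes_cons, aboveTop_cons, add_assoc,
    pow_add t (wordDes _), ← mul_sum, sum_extend_chain_pow h, mul_add]
  rw [sum_add_distrib, ← sum_mul, sum_pow_wordDes_embedding, chainAscSum]
  simp only [pow_add]
  ring

lemma chainAscSum_eq {m n : ℕ} (h : m + 1 ≤ n) (t : ℝ) :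
    chainAscSum m n t = ∑ j ∈ range n, t ^ j +
      ∑ i ∈ range m,
        n.choose (i + 1) * (∑ j ∈ Icc 1 (n - i - 2), t ^ j) * Aeul (i + 1) t := by
  induction m with
  | zero => simp [chainAscSum_zero]
  | succ m ih =>
    rw [chainAscSum_succ h, ih (by omega), sum_range_succ]
    ring

theorem genEuler_Tpq_formula_general (p q : ℕ) (hp : 1 ≤ p) (t : ℝ) :
    genEuler (Trel p q) t =
      (∑ i ∈ Finset.range (min 1 (p - 1) + 1),
        ((p + q).choose i : ℝ) * ∑ j ∈ Finset.Icc i (p + q - i - 1), t ^ j) +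
      ∑ i ∈ Finset.Icc 1 (p - 2),
        ((p + q).choose (i + 1) : ℝ) *
          (∑ j ∈ Finset.Icc 1 (p + q - i - 2), t ^ j) * Aeul (i + 1) t := by
  obtain ⟨m, rfl⟩ : ∃ m, p = m + 1 := ⟨p - 1, by omega⟩
  rw [genEuler_Trel, chainAscSum_eq (by omega), Nat.range_eq_Icc_zero_sub_one _ (by omega)]
  rcases m with _ | m
  · simp
  · conv_rhs => rw [sum_Icc_one_eq_sum_range]
    rw [sum_range_succ', show min 1 (m + 1 + 1 - 1) = 1 by omega, sum_range_succ, sum_range_one,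
      Nat.choose_zero_right, Nat.choose_one_right, Aeul_one, show m + 1 + 1 - 2 = m by omega,
      show m + 1 + 1 + q - 1 - 1 = m + 1 + 1 + q - 0 - 2 by omega]
    simp only [Nat.cast_one, one_mul, mul_one, Nat.sub_zero]
    ring

/-- For `p, q ≥ 1` and `n = p + q`,
`A(T(p,q),t) = ∑_{i=0}^{y} C(n,i)(tⁱ + ⋯ + t^{n-i-1})
  + ∑_{i=1}^{p-2} C(n,i+1)(t + ⋯ + t^{n-i-2}) A_{i+1}(t)`,
with `y = min 1 (p-1)`. -/
theorem genEuler_Tpq_formula (p q : ℕ) (hp : 1 ≤ p) (hq : 1 ≤ q) (t : ℝ) :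
    genEuler (Trel p q) t =
      (∑ i ∈ Finset.range (min 1 (p - 1) + 1),
        ((p + q).choose i : ℝ) * ∑ j ∈ Finset.Icc i (p + q - i - 1), t ^ j) +
      ∑ i ∈ Finset.Icc 1 (p - 2),
        ((p + q).choose (i + 1) : ℝ) *
          (∑ j ∈ Finset.Icc 1 (p + q - i - 2), t ^ j) * Aeul (i + 1) t :=
  genEuler_Tpq_formula_general p q hp t
end
end
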